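/- Suppose there exists a simple graph G on vertex set {1,…,n} such that (i) G contains no clique of size l, and (ii) for every chain ε_1 < ε_2 < ⋯ < ε_{l+1} in T = {0,1}^n, at least one edge of the associated graph J is an edge of G. Then the stepping-up 3-colouring of the triples of T contains no monochromatic clique of size l+1 in any of the three colours; consequently r_3(l+1, l+1, l+1) > 2^n. -/

import Mathlib

/-- `b(ε) = Σ_i ε_i · 2^i`, the number whose binary digits are given by `ε`. -/
def bval {n : ℕ} (ε : Fin n → Bool) : ℕ :=
  ∑ i, if ε i then 2 ^ (i : ℕ) else 0

/-- `δ(ε, ε')`: the largest coordinate at which `ε` and `ε'` differ. -/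
def delta {n : ℕ} (ε ε' : Fin n → Bool) : ℕ :=
  (Finset.univ.filter fun i => ε i ≠ ε' i).sup Fin.val

open scoped Classical in
/-- The stepping-up 3-colouring: for `ε₁ < ε₂ < ε₃` with `δ₁ = δ(ε₁,ε₂)` and
`δ₂ = δ(ε₂,ε₃)`, the triple gets colour `0` (`C₁`) if `{δ₁,δ₂} ∈ E(G)` and
`δ₁ < δ₂`, colour `1` (`C₂`) if `{δ₁,δ₂} ∈ E(G)` and `δ₁ > δ₂`, and colour `2`
(`C₃`) if `{δ₁,δ₂} ∉ E(G)`. -/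
noncomputable def colour {n : ℕ} (G : SimpleGraph ℕ) (ε₁ ε₂ ε₃ : Fin n → Bool) : Fin 3 :=
  if G.Adj (delta ε₁ ε₂) (delta ε₂ ε₃) then
    (if delta ε₁ ε₂ < delta ε₂ ε₃ then 0 else 1)
  else 2

/-- `D`, the set of consecutive values `{δ(ε_i, ε_{i+1}) : 1 ≤ i ≤ l}` of a
chain `ε₁ < ⋯ < ε_{l+1}`. -/
def Dset {n l : ℕ} (ε : Fin (l + 1) → Fin n → Bool) : Finset ℕ :=
  Finset.univ.image fun i : Fin l => delta (ε i.castSucc) (ε i.succ)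

/-- Adjacency in the graph `J` associated to a chain `ε₁ < ⋯ < ε_{l+1}`:
its vertices are the elements of `D`, and distinct `a, b ∈ D` are joined iff
there exist `r < s < t` with `{a, b} = {δ(ε_r, ε_s), δ(ε_s, ε_t)}`. -/
def JAdj {n l : ℕ} (ε : Fin (l + 1) → Fin n → Bool) (a b : ℕ) : Prop :=
  a ∈ Dset ε ∧ b ∈ Dset ε ∧ a ≠ b ∧
  ∃ r s t : Fin (l + 1), r < s ∧ s < t ∧
    ({a, b} : Finset ℕ) = {delta (ε r) (ε s), delta (ε s) (ε t)}

lemma bval_succ {n : ℕ} (ε : Fin (n + 1) → Bool) :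
    bval ε = 2 ^ n * (ε (Fin.last n)).toNat + bval (ε ∘ Fin.castSucc) := by
  rw [bval, Fin.sum_univ_castSucc, bval]
  cases h : ε (Fin.last n) <;> simp [h, Nat.add_comm]

lemma bval_lt_two_pow {n : ℕ} (ε : Fin n → Bool) : bval ε < 2 ^ n := by
  induction n with
  | zero => simp [bval]
  | succ n ih =>
    rw [bval_succ]
    have := ih (ε ∘ Fin.castSucc)
    have : (ε (Fin.last n)).toNat ≤ 1 := Bool.toNat_le _
    have h2 : 2 ^ (n + 1) = 2 ^ n * 2 := by ring
    nlinarith [ih (ε ∘ Fin.castSucc)]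

lemma testBit_bval {n : ℕ} (ε : Fin n → Bool) (j : ℕ) :
    (bval ε).testBit j = if h : j < n then ε ⟨j, h⟩ else false := by
  induction n generalizing j with
  | zero => simp [bval]
  | succ n ih =>
    rw [bval_succ, Nat.testBit_two_pow_mul_add _ (bval_lt_two_pow _)]
    rcases lt_trichotomy j n with h | rfl | h
    · rw [if_pos h, ih, dif_pos h, dif_pos (by omega)]
      rfl
    · rw [if_neg (lt_irrefl _), Nat.sub_self, dif_pos (by omega)]
      have hl : (⟨j, by omega⟩ : Fin (j+1)) = Fin.last j := rfl
      cases h : ε (Fin.last j) <;>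
        simp [h, hl, Nat.testBit_bool_toNat]
    · rw [if_neg (by omega), dif_neg (by omega), Nat.testBit_bool_toNat]
      simp [Nat.sub_eq_zero_iff_le]
      omega

lemma bval_injective {n : ℕ} : Function.Injective (bval (n := n)) := by
  intro ε ε' h
  funext i
  have h1 := testBit_bval ε i
  have h2 := testBit_bval ε' i
  rw [h] at h1
  rw [h1] at h2
  rw [dif_pos i.isLt, dif_pos i.isLt] at h2
  simpa using h2

lemma delta_spec {n : ℕ} {ε ε' : Fin n → Bool} (h : ε ≠ ε') :
    ∃ d : Fin n, (d : ℕ) = delta ε ε' ∧ ε d ≠ ε' d ∧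
      ∀ i : Fin n, (d : ℕ) < (i : ℕ) → ε i = ε' i := by
  classical
  set F := Finset.univ.filter fun i => ε i ≠ ε' i with hF
  have hne : F.Nonempty := by
    by_contra hemp
    apply h
    funext i
    by_contra hi
    exact hemp ⟨i, by simp [hF, hi]⟩
  obtain ⟨d, hdF, hsup⟩ := F.exists_mem_eq_sup hne Fin.val
  refine ⟨d, hsup.symm, (Finset.mem_filter.mp hdF).2, fun i hi => ?_⟩
  by_contra hi'
  have : (i : ℕ) ≤ F.sup Fin.val := Finset.le_sup (by simp [hF, hi'])
  omega

lemma delta_eq_of_spec {n : ℕ} {ε ε' : Fin n → Bool} (d : Fin n)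
    (hd : ε d ≠ ε' d) (hmax : ∀ i : Fin n, (d : ℕ) < (i : ℕ) → ε i = ε' i) :
    delta ε ε' = (d : ℕ) := by
  classical
  refine le_antisymm (Finset.sup_le fun i hi => ?_)
    (Finset.le_sup (by simp [hd]))
  by_contra hlt
  exact (Finset.mem_filter.mp hi).2 (hmax i (by omega))

lemma bval_lt_of_spec {n : ℕ} {ε ε' : Fin n → Bool} (d : Fin n)
    (h0 : ε d = false) (h1 : ε' d = true)
    (hmax : ∀ i : Fin n, (d : ℕ) < (i : ℕ) → ε i = ε' i) :
    bval ε < bval ε' := by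
  refine Nat.lt_of_testBit (d : ℕ) ?_ ?_ fun j hj => ?_
  · rw [testBit_bval, dif_pos d.isLt]; simpa using h0
  · rw [testBit_bval, dif_pos d.isLt]; simpa using h1
  · rw [testBit_bval, testBit_bval]
    split
    · next h => exact hmax ⟨j, h⟩ hj
    · rfl

lemma bval_lt_iff_of_spec {n : ℕ} {ε ε' : Fin n → Bool} (d : Fin n)
    (hd : ε d ≠ ε' d) (hmax : ∀ i : Fin n, (d : ℕ) < (i : ℕ) → ε i = ε' i) :
    bval ε < bval ε' ↔ ε' d = true := by
  constructor
  · intro hlt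
    by_contra h1
    have h1 : ε' d = false := by simpa using h1
    have h0 : ε d = true := by
      cases h : ε d
      · exact absurd (h.trans h1.symm) hd
      · rfl
    have := bval_lt_of_spec d h1 h0 fun i hi => (hmax i hi).symm
    omega
  · intro h1
    have h0 : ε d = false := by
      cases h : ε d
      · rfl
      · exact absurd (h.trans h1.symm) hd
    exact bval_lt_of_spec d h0 h1 hmax

lemma ne_of_bval_lt {n : ℕ} {ε ε' : Fin n → Bool} (h : bval ε < bval ε') :
    ε ≠ ε' := fun he => by simp [he] at h

lemma delta_ne {n : ℕ} {ε₁ ε₂ ε₃ : Fin n → Bool}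
    (h12 : bval ε₁ < bval ε₂) (h23 : bval ε₂ < bval ε₃) :
    delta ε₁ ε₂ ≠ delta ε₂ ε₃ := by
  obtain ⟨d₁, hd₁, hne₁, hmax₁⟩ := delta_spec (ne_of_bval_lt h12)
  obtain ⟨d₂, hd₂, hne₂, hmax₂⟩ := delta_spec (ne_of_bval_lt h23)
  have e1 : ε₂ d₁ = true := (bval_lt_iff_of_spec d₁ hne₁ hmax₁).mp h12
  have e3 : ε₃ d₂ = true := (bval_lt_iff_of_spec d₂ hne₂ hmax₂).mp h23
  have e2 : ε₂ d₂ = false := by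
    cases h : ε₂ d₂
    · rfl
    · exact absurd (h.trans e3.symm) hne₂
  intro he
  have : d₁ = d₂ := Fin.val_injective (by omega)
  rw [this, e2] at e1
  exact Bool.false_ne_true e1

lemma delta_trans {n : ℕ} {ε₁ ε₂ ε₃ : Fin n → Bool}
    (h12 : bval ε₁ < bval ε₂) (h23 : bval ε₂ < bval ε₃) :
    delta ε₁ ε₃ = max (delta ε₁ ε₂) (delta ε₂ ε₃) := by
  obtain ⟨d₁, hd₁, hne₁, hmax₁⟩ := delta_spec (ne_of_bval_lt h12)
  obtain ⟨d₂, hd₂, hne₂, hmax₂⟩ := delta_spec (ne_of_bval_lt h23)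
  have hne := delta_ne h12 h23
  rcases lt_trichotomy (d₁ : ℕ) (d₂ : ℕ) with h | h | h
  · have : delta ε₁ ε₃ = (d₂ : ℕ) := by
      refine delta_eq_of_spec d₂ ?_ fun i hi => ?_
      · rw [hmax₁ d₂ (by omega)]; exact hne₂
      · rw [hmax₁ i (by omega), hmax₂ i hi]
    omega
  · omega
  · have : delta ε₁ ε₃ = (d₁ : ℕ) := by
      refine delta_eq_of_spec d₁ ?_ fun i hi => ?_
      · rw [← hmax₂ d₁ (by omega)]; exact hne₁
      · rw [hmax₁ i hi, hmax₂ i (by omega)]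
    omega


lemma colour_eq_zero {n : ℕ} {G : SimpleGraph ℕ} {ε₁ ε₂ ε₃ : Fin n → Bool}
    (h : colour G ε₁ ε₂ ε₃ = 0) :
    G.Adj (delta ε₁ ε₂) (delta ε₂ ε₃) ∧ delta ε₁ ε₂ < delta ε₂ ε₃ := by
  unfold colour at h
  split_ifs at h with h1 h2
  · exact ⟨h1, h2⟩
  · exact absurd h (by decide)
  · exact absurd h (by decide)

lemma colour_eq_one {n : ℕ} {G : SimpleGraph ℕ} {ε₁ ε₂ ε₃ : Fin n → Bool}
    (h : colour G ε₁ ε₂ ε₃ = 1) :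
    G.Adj (delta ε₁ ε₂) (delta ε₂ ε₃) ∧ ¬ delta ε₁ ε₂ < delta ε₂ ε₃ := by
  unfold colour at h
  split_ifs at h with h1 h2
  · exact absurd h (by decide)
  · exact ⟨h1, h2⟩
  · exact absurd h (by decide)

lemma colour_eq_two {n : ℕ} {G : SimpleGraph ℕ} {ε₁ ε₂ ε₃ : Fin n → Bool}
    (h : colour G ε₁ ε₂ ε₃ = 2) :
    ¬ G.Adj (delta ε₁ ε₂) (delta ε₂ ε₃) := by
  unfold colour at h
  split_ifs at h with h1 h2
  · exact absurd h (by decide)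
  · exact absurd h (by decide)
  · exact h1

lemma partA_aux {n l : ℕ} (G : SimpleGraph ℕ)
    (hfree : G.CliqueFree l)
    (hJ : ∀ ε : Fin (l + 1) → Fin n → Bool,
      (∀ i j : Fin (l + 1), i < j → bval (ε i) < bval (ε j)) →
      ∃ a b : ℕ, JAdj ε a b ∧ G.Adj a b)
    (c : Fin 3) (ε : Fin (l + 1) → Fin n → Bool)
    (hchain : ∀ i j : Fin (l + 1), i < j → bval (ε i) < bval (ε j))
    (hC : ∀ (i j k : Fin (l + 1)), i < j → j < k →
      colour G (ε i) (ε j) (ε k) = c) : False := by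
  set d : Fin l → ℕ := fun i => delta (ε i.castSucc) (ε i.succ) with hd
  -- helper to get a clique from pairwise adjacency
  have clique : (∀ i j : Fin l, i < j → G.Adj (d i) (d j)) → False := by
    intro hAdj
    have hinj : Function.Injective d := by
      intro i j hij
      by_contra hne
      rcases lt_or_gt_of_ne hne with h | h
      · exact (G.ne_of_adj (hAdj i j h)) hij
      · exact (G.ne_of_adj (hAdj j i h)) hij.symm
    refine hfree (Finset.univ.image d) ⟨?_, ?_⟩
    · intro x hx y hy hxy
      simp only [Finset.coe_image, Set.mem_image] at hx hy
      obtain ⟨i, -, rfl⟩ := hx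
      obtain ⟨j, -, rfl⟩ := hy
      rcases lt_or_gt_of_ne (fun h : i = j => hxy (congrArg d h)) with h | h
      · exact hAdj i j h
      · exact (hAdj j i h).symm
    · rw [Finset.card_image_of_injective _ hinj]
      simp
  fin_cases c
  -- colour 0 : increasing deltas
  · have hAL : ∀ (i j k : Fin (l + 1)), i < j → j < k →
        G.Adj (delta (ε i) (ε j)) (delta (ε j) (ε k)) ∧
          delta (ε i) (ε j) < delta (ε j) (ε k) :=
      fun i j k hij hjk => colour_eq_zero (hC i j k hij hjk)
    have hgap : ∀ k, k < l → ∀ i, i ≤ k →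
        ∀ (h1 : i < l + 1) (h2 : k + 1 < l + 1) (h3 : k < l),
        delta (ε ⟨i, h1⟩) (ε ⟨k + 1, h2⟩) = d ⟨k, h3⟩ := by
      intro k
      induction k with
      | zero =>
        intro _ i hi h1 h2 h3
        interval_cases i
        rfl
      | succ k IH =>
        intro hk i hi h1 h2 h3
        rcases Nat.lt_or_ge i (k + 1) with hik | hik
        · have e1 := IH (by omega) i (by omega) (by omega) (by omega) (by omega)
          have hab := hchain ⟨i, h1⟩ ⟨k + 1, by omega⟩ (by simp [Fin.lt_def]; omega)
          have hbc := hchain ⟨k + 1, by omega⟩ ⟨k + 2, by omega⟩ (by simp [Fin.lt_def])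
          have ht := delta_trans hab hbc
          have hmon : d ⟨k, by omega⟩ < d ⟨k + 1, h3⟩ :=
            (hAL ⟨k, by omega⟩ ⟨k + 1, by omega⟩ ⟨k + 2, by omega⟩
              (by simp [Fin.lt_def]) (by simp [Fin.lt_def])).2
          have e2 : delta (ε ⟨k + 1, by omega⟩) (ε ⟨k + 2, by omega⟩) = d ⟨k + 1, h3⟩ := rfl
          rw [ht, e1, e2]
          exact max_eq_right hmon.le
        · have : i = k + 1 := by omega
          subst this
          rfl
    apply clique
    intro i j hij
    have hij' : (i : ℕ) < (j : ℕ) := hij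
    have h1 : (i.castSucc : Fin (l + 1)) < i.succ := Fin.castSucc_lt_succ (i := i)
    have h2 : (i.succ : Fin (l + 1)) < j.succ := Fin.succ_lt_succ_iff.mpr hij
    have hA := (hAL i.castSucc i.succ j.succ h1 h2).1
    have e : delta (ε ⟨(i : ℕ) + 1, by omega⟩) (ε ⟨(j : ℕ) + 1, by omega⟩) = d ⟨(j : ℕ), j.isLt⟩ :=
      hgap (j : ℕ) j.isLt ((i : ℕ) + 1) (by omega) (by omega) (by omega) j.isLt
    exact e ▸ hA
  -- colour 1 : decreasing deltas
  · have hAL : ∀ (i j k : Fin (l + 1)), i < j → j < k →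
        G.Adj (delta (ε i) (ε j)) (delta (ε j) (ε k)) ∧
          ¬ delta (ε i) (ε j) < delta (ε j) (ε k) :=
      fun i j k hij hjk => colour_eq_one (hC i j k hij hjk)
    have hcons : ∀ k, ∀ (h2 : k + 1 < l) (h3 : k < l), d ⟨k + 1, h2⟩ < d ⟨k, h3⟩ := by
      intro k h2 h3
      have hne := delta_ne (hchain ⟨k, by omega⟩ ⟨k + 1, by omega⟩ (by simp [Fin.lt_def]))
        (hchain ⟨k + 1, by omega⟩ ⟨k + 2, by omega⟩ (by simp [Fin.lt_def]))
      have := (hAL ⟨k, by omega⟩ ⟨k + 1, by omega⟩ ⟨k + 2, by omega⟩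
        (by simp [Fin.lt_def]) (by simp [Fin.lt_def])).2
      have hne' : d ⟨k, h3⟩ ≠ d ⟨k + 1, h2⟩ := hne
      have hnlt : ¬ d ⟨k, h3⟩ < d ⟨k + 1, h2⟩ := this
      omega
    have hdec : ∀ j, j < l → ∀ i, i < j →
        ∀ (h1 : j < l) (h2 : i < l), d ⟨j, h1⟩ < d ⟨i, h2⟩ := by
      intro j
      induction j with
      | zero => omega
      | succ j IH =>
        intro hj i hi h1 h2
        rcases Nat.lt_or_ge i j with hij | hij
        · exact lt_trans (hcons j h1 (by omega)) (IH (by omega) i hij (by omega) h2)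
        · have : i = j := by omega
          subst this
          exact hcons i h1 h2
    have hgap : ∀ k, k < l → ∀ i, i ≤ k →
        ∀ (h1 : i < l + 1) (h2 : k + 1 < l + 1) (h4 : i < l),
        delta (ε ⟨i, h1⟩) (ε ⟨k + 1, h2⟩) = d ⟨i, h4⟩ := by
      intro k
      induction k with
      | zero =>
        intro _ i hi h1 h2 h4
        interval_cases i
        rfl
      | succ k IH =>
        intro hk i hi h1 h2 h4
        rcases Nat.lt_or_ge i (k + 1) with hik | hik
        · have e1 := IH (by omega) i (by omega) (by omega) (by omega) h4
          have hab := hchain ⟨i, h1⟩ ⟨k + 1, by omega⟩ (by simp [Fin.lt_def]; omega)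
          have hbc := hchain ⟨k + 1, by omega⟩ ⟨k + 2, by omega⟩ (by simp [Fin.lt_def])
          have ht := delta_trans hab hbc
          have e2 : delta (ε ⟨k + 1, by omega⟩) (ε ⟨k + 2, by omega⟩) = d ⟨k + 1, hk⟩ := rfl
          have hmon : d ⟨k + 1, hk⟩ < d ⟨i, h4⟩ := hdec (k + 1) hk i hik hk h4
          rw [ht, e1, e2]
          exact max_eq_left hmon.le
        · have : i = k + 1 := by omega
          subst this
          rfl
    apply clique
    intro i j hij
    have hij' : (i : ℕ) < (j : ℕ) := hij
    have h1 : (i.castSucc : Fin (l + 1)) < j.castSucc := by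
      rw [Fin.lt_def, Fin.coe_castSucc, Fin.coe_castSucc]
      exact hij'
    have h2 : (j.castSucc : Fin (l + 1)) < j.succ := Fin.castSucc_lt_succ (i := j)
    have hA := (hAL i.castSucc j.castSucc j.succ h1 h2).1
    have e := hgap ((j : ℕ) - 1) (by omega) (i : ℕ) (by omega) (by omega) (by omega) i.isLt
    have e2 : (⟨(j : ℕ) - 1 + 1, by omega⟩ : Fin (l + 1)) = j.castSucc := by
      apply Fin.ext
      show (j : ℕ) - 1 + 1 = (j : ℕ)
      omega
    rw [e2] at e
    have hA' : G.Adj (delta (ε i.castSucc) (ε j.castSucc)) (d j) := hA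
    rw [show delta (ε i.castSucc) (ε j.castSucc) = delta (ε ⟨(i : ℕ), by omega⟩) (ε j.castSucc) from rfl, e] at hA'
    exact hA'
  -- colour 2 : J uses an edge of G
  · obtain ⟨a, b, ⟨-, -, hab, r, s, t, hrs, hst, hset⟩, hadj⟩ := hJ ε hchain
    have hc2 := colour_eq_two (hC r s t hrs hst)
    have haRS : a ∈ ({delta (ε r) (ε s), delta (ε s) (ε t)} : Finset ℕ) := by
      rw [← hset]; simp
    have hbRS : b ∈ ({delta (ε r) (ε s), delta (ε s) (ε t)} : Finset ℕ) := by
      rw [← hset]; simp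
    simp only [Finset.mem_insert, Finset.mem_singleton] at haRS hbRS
    rcases haRS with ha | ha <;> rcases hbRS with hb | hb
    · exact hab (ha.trans hb.symm)
    · exact hc2 (ha ▸ hb ▸ hadj)
    · exact hc2 (ha ▸ hb ▸ hadj.symm)
    · exact hab (ha.trans hb.symm)

lemma partA {n l : ℕ} (G : SimpleGraph ℕ)
    (hfree : G.CliqueFree l)
    (hJ : ∀ ε : Fin (l + 1) → Fin n → Bool,
      (∀ i j : Fin (l + 1), i < j → bval (ε i) < bval (ε j)) →
      ∃ a b : ℕ, JAdj ε a b ∧ G.Adj a b) :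
    ¬ ∃ (S : Finset (Fin n → Bool)) (c : Fin 3), S.card = l + 1 ∧
        ∀ ε₁ ε₂ ε₃, ε₁ ∈ S → ε₂ ∈ S → ε₃ ∈ S →
          bval ε₁ < bval ε₂ → bval ε₂ < bval ε₃ →
            colour G ε₁ ε₂ ε₃ = c := by
  classical
  rintro ⟨S, c, hcard, hmono⟩
  have hcard' : (S.image bval).card = l + 1 := by
    rw [Finset.card_image_of_injective _ bval_injective, hcard]
  set g := (S.image bval).orderEmbOfFin hcard' with hg
  have hpre : ∀ i : Fin (l + 1), ∃ a, a ∈ S ∧ bval a = g i := by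
    intro i
    have := (S.image bval).orderEmbOfFin_mem hcard' i
    rw [Finset.mem_image] at this
    exact this
  choose ε hmem hbg using hpre
  have hchain : ∀ i j : Fin (l + 1), i < j → bval (ε i) < bval (ε j) := by
    intro i j hij
    rw [hbg, hbg]
    exact g.strictMono hij
  exact partA_aux G hfree hJ c ε hchain fun i j k hij hjk =>
    hmono _ _ _ (hmem i) (hmem j) (hmem k) (hchain _ _ hij) (hchain _ _ hjk)

def toBits (n : ℕ) (m : Fin (2 ^ n)) : Fin n → Bool := fun i => (m : ℕ).testBit i

lemma bval_toBits {n : ℕ} (m : Fin (2 ^ n)) : bval (toBits n m) = (m : ℕ) := by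
  apply Nat.eq_of_testBit_eq
  intro j
  rw [testBit_bval]
  split
  · rfl
  · next h =>
    exact (Nat.testBit_lt_two_pow (lt_of_lt_of_le m.isLt
      (Nat.pow_le_pow_right (by norm_num) (by omega)))).symm

lemma toBits_injective {n : ℕ} : Function.Injective (toBits n) := by
  intro m m' h
  have := congrArg bval h
  rw [bval_toBits, bval_toBits] at this
  exact Fin.val_injective this

noncomputable def chi (n : ℕ) (G : SimpleGraph ℕ) (t : Finset (Fin (2 ^ n))) : Fin 3 :=
  if h : t.card = 3 then
    colour G
      (toBits n (t.min' (Finset.card_pos.mp (by omega))))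
      (toBits n ((t.erase (t.min' (Finset.card_pos.mp (by omega)))).min'
        (Finset.card_pos.mp (by
          rw [Finset.card_erase_of_mem (t.min'_mem _)]; omega))))
      (toBits n (t.max' (Finset.card_pos.mp (by omega))))
  else 0

lemma chi_triple {n : ℕ} (G : SimpleGraph ℕ) (a b c : Fin (2 ^ n))
    (hab : a < b) (hbc : b < c) :
    chi n G {a, b, c} = colour G (toBits n a) (toBits n b) (toBits n c) := by
  have hab' : a ≠ b := ne_of_lt hab
  have hac' : a ≠ c := ne_of_lt (hab.trans hbc)
  have hbc' : b ≠ c := ne_of_lt hbc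
  have hc3 : ({a, b, c} : Finset (Fin (2 ^ n))).card = 3 := by
    rw [Finset.card_insert_of_notMem (by simp [hab', hac']),
      Finset.card_insert_of_notMem (by simp [hbc']), Finset.card_singleton]
  have hmin : ∀ h, ({a, b, c} : Finset (Fin (2 ^ n))).min' h = a := by
    intro h
    refine le_antisymm (Finset.min'_le _ _ (by simp)) (Finset.le_min' _ _ _ fun y hy => ?_)
    simp only [Finset.mem_insert, Finset.mem_singleton] at hy
    rcases hy with rfl | rfl | rfl
    · exact le_refl _
    · exact hab.le
    · exact (hab.trans hbc).le
  have hmax : ∀ h, ({a, b, c} : Finset (Fin (2 ^ n))).max' h = c := by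
    intro h
    refine le_antisymm (Finset.max'_le _ _ _ fun y hy => ?_) (Finset.le_max' _ _ (by simp))
    simp only [Finset.mem_insert, Finset.mem_singleton] at hy
    rcases hy with rfl | rfl | rfl
    · exact (hab.trans hbc).le
    · exact hbc.le
    · exact le_refl _
  have herase : ∀ h, (({a, b, c} : Finset (Fin (2 ^ n))).erase
      (({a, b, c} : Finset (Fin (2 ^ n))).min' h)) = {b, c} := by
    intro h
    rw [hmin h]
    exact Finset.erase_insert (by simp [hab', hac'])
  have hmid : ∀ h, (({b, c} : Finset (Fin (2 ^ n)))).min' h = b := by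
    intro h
    refine le_antisymm (Finset.min'_le _ _ (by simp)) (Finset.le_min' _ _ _ fun y hy => ?_)
    simp only [Finset.mem_insert, Finset.mem_singleton] at hy
    rcases hy with rfl | rfl
    · exact le_refl _
    · exact hbc.le
  rw [chi, dif_pos hc3]
  congr 1
  · exact congrArg _ (hmin _)
  · refine congrArg _ ?_
    refine le_antisymm (Finset.min'_le _ _ ?_) (Finset.le_min' _ _ _ fun y hy => ?_)
    · rw [herase _]; simp
    · rw [herase _] at hy
      simp only [Finset.mem_insert, Finset.mem_singleton] at hy
      rcases hy with rfl | rfl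
      · exact le_refl _
      · exact hbc.le
  · exact congrArg _ (hmax _)

/-- Suppose `G` is a simple graph on `{1,…,n}` with no clique of size `l` such
that for every chain `ε₁ < ⋯ < ε_{l+1}` in `T = {0,1}ⁿ` at least one edge of the
associated graph `J` is an edge of `G`. Then the stepping-up 3-colouring of the
triples of `T` contains no monochromatic clique of size `l + 1` in any colour;
consequently `r₃(l+1, l+1, l+1) > 2 ^ n`. -/
theorem stepping_up_no_mono_clique {n l : ℕ} (G : SimpleGraph ℕ)
    (hG : ∀ a b, G.Adj a b → a < n ∧ b < n)
    (hfree : G.CliqueFree l)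
    (hJ : ∀ ε : Fin (l + 1) → Fin n → Bool,
      (∀ i j : Fin (l + 1), i < j → bval (ε i) < bval (ε j)) →
      ∃ a b : ℕ, JAdj ε a b ∧ G.Adj a b) :
    (¬ ∃ (S : Finset (Fin n → Bool)) (c : Fin 3), S.card = l + 1 ∧
        ∀ ε₁ ε₂ ε₃, ε₁ ∈ S → ε₂ ∈ S → ε₃ ∈ S →
          bval ε₁ < bval ε₂ → bval ε₂ < bval ε₃ →
            colour G ε₁ ε₂ ε₃ = c) ∧
      ∃ χ : Finset (Fin (2 ^ n)) → Fin 3,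
        ¬ ∃ (S : Finset (Fin (2 ^ n))) (i : Fin 3), S.card = l + 1 ∧
            ∀ t ⊆ S, t.card = 3 → χ t = i := by
  classical
  have hA := partA G hfree hJ
  refine ⟨hA, chi n G, ?_⟩
  rintro ⟨S, i, hScard, hSmono⟩
  apply hA
  refine ⟨S.image (toBits n), i, ?_, ?_⟩
  · rw [Finset.card_image_of_injective _ toBits_injective, hScard]
  · intro ε₁ ε₂ ε₃ h₁ h₂ h₃ h12 h23
    rw [Finset.mem_image] at h₁ h₂ h₃
    obtain ⟨m₁, hm₁, rfl⟩ := h₁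
    obtain ⟨m₂, hm₂, rfl⟩ := h₂
    obtain ⟨m₃, hm₃, rfl⟩ := h₃
    rw [bval_toBits, bval_toBits] at h12
    rw [bval_toBits, bval_toBits] at h23
    have h12' : m₁ < m₂ := h12
    have h23' : m₂ < m₃ := h23
    have hsub : ({m₁, m₂, m₃} : Finset (Fin (2 ^ n))) ⊆ S := by
      intro x hx
      simp only [Finset.mem_insert, Finset.mem_singleton] at hx
      rcases hx with rfl | rfl | rfl <;> assumption
    have hc3 : ({m₁, m₂, m₃} : Finset (Fin (2 ^ n))).card = 3 := by
      rw [Finset.card_insert_of_notMem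
          (by simp [ne_of_lt h12', ne_of_lt (h12'.trans h23')]),
        Finset.card_insert_of_notMem (by simp [ne_of_lt h23']),
        Finset.card_singleton]
    have := hSmono _ hsub hc3
    rw [chi_triple G m₁ m₂ m₃ h12' h23'] at this
    exact this
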